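/- arXiv:1306.1901 — 8 statements merged into one kernel-verified Lean document; each statement's English description precedes it below -/
import Mathlib

section
/- Farkas' Lemma (affine form over the rationals): Let m, n be natural numbers, let a : Fin m → Fin n → ℚ and b : Fin m → ℚ define a system S of linear inequations { ∑_{j} a i j * x j + b i ≥ 0 : i ∈ Fin m }, and assume S is satisfiable, i.e. there exists x : Fin n → ℚ with ∑_j a i j * x j + b i ≥ 0 for every i. Then for every c : Fin n → ℚ and d : ℚ, the entailment (∀ x : Fin n → ℚ, (∀ i, ∑_j a i j * x j + b i ≥ 0) → ∑_j c j * x j + d ≥ 0) holds if and only if there exists λ : Fin m → ℚ with λ i ≥ 0 for all i, d ≥ ∑_i λ i * b i, and c j = ∑_i λ i * a i j for every j. -/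
/-!
The homogeneous lemma is proved by induction on the number of inequalities. If `k` already
follows from all inequalities but `0 ≤ r ⬝ᵥ y`, induction applies directly. Otherwise some `w`
satisfies the others with `k ⬝ᵥ w < 0`, hence `r ⬝ᵥ w < 0`. Projecting every vector along `r`
onto the hyperplane `w ⬝ᵥ _ = 0` removes the inequality for `r`, and `k` is recovered from the
projected certificate by adding back a nonnegative multiple of `r`.

The affine form follows by homogenization with an extra coordinate `t ≥ 0`: points with `t > 0`
rescale to solutions of the affine system, and points with `t = 0` are recession directions of
the (nonempty) solution set, along which the target cannot decrease.
-/

open Matrix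

lemma sumElim_dotProduct {R ι : Type*} [NonUnitalNonAssocSemiring R] [Fintype ι] (u : ι → R)
    (s : R) (y : ι ⊕ Unit → R) :
    Sum.elim u (fun _ => s) ⬝ᵥ y = u ⬝ᵥ (y ∘ Sum.inl) + s * y (Sum.inr ()) := by
  rw [← Sum.elim_comp_inl_inr y, sumElim_dotProduct_sumElim]
  simp [dotProduct]

section Field

variable {𝕜 ι : Type*} [Field 𝕜] [Fintype ι]

/-- The projection of `v` along `r` onto the hyperplane `w ⬝ᵥ _ = 0` (when `r ⬝ᵥ w ≠ 0`). -/
def projAlong (r w v : ι → 𝕜) : ι → 𝕜 := v - (v ⬝ᵥ w / r ⬝ᵥ w) • r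

lemma projAlong_dotProduct (r w v y : ι → 𝕜) :
    projAlong r w v ⬝ᵥ y = v ⬝ᵥ projAlong w r y := by
  simp only [projAlong, sub_dotProduct, dotProduct_sub, smul_dotProduct, dotProduct_smul,
    smul_eq_mul, dotProduct_comm y, dotProduct_comm w r]
  ring

lemma projAlong_self {r w : ι → 𝕜} (h : r ⬝ᵥ w ≠ 0) : projAlong r w r = 0 := by
  simp [projAlong, div_self h]

lemma forall_projAlong_dotProduct_nonneg [Preorder 𝕜] {κ : Type*} {r w k : ι → 𝕜}
    {A : κ → ι → 𝕜} (h : ∀ y, 0 ≤ r ⬝ᵥ y → (∀ i, 0 ≤ A i ⬝ᵥ y) → 0 ≤ k ⬝ᵥ y)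
    (hrw : r ⬝ᵥ w ≠ 0) (y : ι → 𝕜) (hy : ∀ i, 0 ≤ projAlong r w (A i) ⬝ᵥ y) :
    0 ≤ projAlong r w k ⬝ᵥ y := by
  simp only [projAlong_dotProduct] at hy ⊢
  refine h _ ?_ hy
  rw [← projAlong_dotProduct, projAlong_self hrw, zero_dotProduct]

end Field

section LinearOrderedField

variable {𝕜 ι : Type*} [Field 𝕜] [LinearOrder 𝕜] [IsStrictOrderedRing 𝕜] [Fintype ι]

lemma eq_zero_of_forall_dotProduct_nonneg {k : ι → 𝕜} (h : ∀ y, 0 ≤ k ⬝ᵥ y) : k = 0 := by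
  have hk := h (-k)
  rw [dotProduct_neg, neg_nonneg] at hk
  exact dotProduct_self_eq_zero.mp <|
    le_antisymm hk (Finset.sum_nonneg fun i _ => mul_self_nonneg (k i))

lemma exists_nonneg_smul_add_sum_smul_eq {κ : Type*} [Fintype κ] {r w k : ι → 𝕜}
    {A : κ → ι → 𝕜} {μ : κ → 𝕜} (hr : r ⬝ᵥ w < 0) (hA : ∀ i, 0 ≤ A i ⬝ᵥ w)
    (hk : k ⬝ᵥ w < 0) (hμ : 0 ≤ μ) (heq : ∑ i, μ i • projAlong r w (A i) = projAlong r w k) :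
    ∃ s : 𝕜, 0 ≤ s ∧ s • r + ∑ i, μ i • A i = k := by
  have hβ : ∑ i, μ i * (A i ⬝ᵥ w / r ⬝ᵥ w) ≤ 0 :=
    Finset.sum_nonpos fun i _ => mul_nonpos_of_nonneg_of_nonpos (hμ i)
      (div_nonpos_of_nonneg_of_nonpos (hA i) hr.le)
  refine ⟨k ⬝ᵥ w / r ⬝ᵥ w - ∑ i, μ i * (A i ⬝ᵥ w / r ⬝ᵥ w), ?_, ?_⟩
  · linarith [div_pos_of_neg_of_neg hk hr]
  · simp only [projAlong, smul_sub, Finset.sum_sub_distrib, smul_smul, ← Finset.sum_smul] at heq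
    linear_combination (norm := module) heq

theorem exists_nonneg_sum_smul_eq_of_forall_dotProduct_nonneg_fin {m : ℕ}
    (A : Fin m → ι → 𝕜) {k : ι → 𝕜} (h : ∀ y, (∀ i, 0 ≤ A i ⬝ᵥ y) → 0 ≤ k ⬝ᵥ y) :
    ∃ μ : Fin m → 𝕜, 0 ≤ μ ∧ ∑ i, μ i • A i = k := by
  induction m generalizing k with
  | zero =>
    exact ⟨0, le_rfl, by simp [eq_zero_of_forall_dotProduct_nonneg fun y => h y finZeroElim]⟩
  | succ m ih =>
    simp only [Fin.forall_fin_succ] at h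
    by_cases htail : ∀ y, (∀ i : Fin m, 0 ≤ A i.succ ⬝ᵥ y) → 0 ≤ k ⬝ᵥ y
    · obtain ⟨μ, hμ, rfl⟩ := ih _ htail
      exact ⟨Fin.cons 0 μ, Fin.le_cons.2 ⟨le_rfl, hμ⟩, by simp [Fin.sum_univ_succ]⟩
    · push Not at htail
      obtain ⟨w, hw, hkw⟩ := htail
      have hrw : A 0 ⬝ᵥ w < 0 := lt_of_not_ge fun h0 => hkw.not_ge (h w ⟨h0, hw⟩)
      obtain ⟨μ, hμ, heq⟩ :=
        ih _ (forall_projAlong_dotProduct_nonneg (fun y h0 hy => h y ⟨h0, hy⟩) hrw.ne)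
      obtain ⟨s, hs, hk⟩ := exists_nonneg_smul_add_sum_smul_eq hrw hw hkw hμ heq
      exact ⟨Fin.cons s μ, Fin.le_cons.2 ⟨hs, hμ⟩, by simpa [Fin.sum_univ_succ] using hk⟩

theorem exists_nonneg_sum_smul_eq_of_forall_dotProduct_nonneg {κ : Type*} [Fintype κ]
    (A : κ → ι → 𝕜) {k : ι → 𝕜} (h : ∀ y, (∀ i, 0 ≤ A i ⬝ᵥ y) → 0 ≤ k ⬝ᵥ y) :
    ∃ μ : κ → 𝕜, 0 ≤ μ ∧ ∑ i, μ i • A i = k := by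
  let e := Fintype.equivFin κ
  obtain ⟨μ, hμ, hk⟩ := exists_nonneg_sum_smul_eq_of_forall_dotProduct_nonneg_fin (A ∘ e.symm)
    fun y hy => h y fun i => by simpa using hy (e i)
  exact ⟨μ ∘ e, fun i => hμ (e i), by rw [← hk, ← e.symm.sum_comp]; simp⟩

variable {κ : Type*} {a : κ → ι → 𝕜} {b : κ → 𝕜} {c : ι → 𝕜} {d : 𝕜}

lemma dotProduct_nonneg_of_recession {x₀ : ι → 𝕜} (hx₀ : ∀ i, 0 ≤ a i ⬝ᵥ x₀ + b i)
    (hent : ∀ x, (∀ i, 0 ≤ a i ⬝ᵥ x + b i) → 0 ≤ c ⬝ᵥ x + d) {y : ι → 𝕜}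
    (hy : ∀ i, 0 ≤ a i ⬝ᵥ y) : 0 ≤ c ⬝ᵥ y := by
  by_contra! hcy
  set s := (c ⬝ᵥ x₀ + d + 1) / -(c ⬝ᵥ y)
  have hs : 0 < s := div_pos (by linarith [hent x₀ hx₀]) (neg_pos.2 hcy)
  have hfeas : ∀ i, 0 ≤ a i ⬝ᵥ (x₀ + s • y) + b i := fun i => by
    rw [dotProduct_add, dotProduct_smul, smul_eq_mul]
    nlinarith [hx₀ i, hy i]
  have hscy : s * c ⬝ᵥ y = -(c ⬝ᵥ x₀ + d + 1) := by
    rw [← neg_eq_iff_eq_neg, ← mul_neg, div_mul_cancel₀ _ (neg_pos.2 hcy).ne']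
  have hcs := hent _ hfeas
  rw [dotProduct_add, dotProduct_smul, smul_eq_mul, hscy] at hcs
  linarith

lemma dotProduct_add_mul_nonneg (hsat : ∃ x₀, ∀ i, 0 ≤ a i ⬝ᵥ x₀ + b i)
    (hent : ∀ x, (∀ i, 0 ≤ a i ⬝ᵥ x + b i) → 0 ≤ c ⬝ᵥ x + d) {y : ι → 𝕜} {t : 𝕜} (ht : 0 ≤ t)
    (hy : ∀ i, 0 ≤ a i ⬝ᵥ y + b i * t) : 0 ≤ c ⬝ᵥ y + d * t := by
  rcases ht.eq_or_lt with rfl | ht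
  · obtain ⟨x₀, hx₀⟩ := hsat
    simpa using dotProduct_nonneg_of_recession hx₀ hent (by simpa using hy)
  · have hscale (v : ι → 𝕜) (s : 𝕜) : v ⬝ᵥ (t⁻¹ • y) + s = t⁻¹ * (v ⬝ᵥ y + s * t) := by
      rw [dotProduct_smul, smul_eq_mul]
      field_simp
    have hcy := hent (t⁻¹ • y) fun i => by
      rw [hscale]
      exact mul_nonneg (inv_nonneg.2 ht.le) (hy i)
    rw [hscale] at hcy
    exact (mul_nonneg_iff_of_pos_left (inv_pos.2 ht)).1 hcy

theorem forall_dotProduct_add_nonneg_iff [Fintype κ] (hsat : ∃ x₀, ∀ i, 0 ≤ a i ⬝ᵥ x₀ + b i) :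
    (∀ x, (∀ i, 0 ≤ a i ⬝ᵥ x + b i) → 0 ≤ c ⬝ᵥ x + d) ↔
      ∃ lam : κ → 𝕜, 0 ≤ lam ∧ lam ⬝ᵥ b ≤ d ∧ ∑ i, lam i • a i = c := by
  constructor
  · intro hent
    set A : κ ⊕ Unit → ι ⊕ Unit → 𝕜 :=
      Sum.elim (fun i => Sum.elim (a i) fun _ => b i) fun _ => Sum.elim 0 fun _ => 1
    obtain ⟨μ, hμ, hk⟩ := exists_nonneg_sum_smul_eq_of_forall_dotProduct_nonneg A
      (k := Sum.elim c fun _ => d) fun y hy => by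
        simp only [A, Sum.forall, Sum.elim_inl, Sum.elim_inr, sumElim_dotProduct] at hy ⊢
        refine dotProduct_add_mul_nonneg hsat hent ?_ hy.1
        simpa using hy.2
    refine ⟨μ ∘ Sum.inl, fun i => hμ _, ?_, ?_⟩
    · have hd := congrFun hk (Sum.inr ())
      simp only [Finset.sum_apply, Pi.smul_apply, smul_eq_mul, Fintype.sum_sum_type,
        Sum.elim_inl, Sum.elim_inr, Finset.univ_unique, PUnit.default_eq_unit, mul_one,
        Finset.sum_singleton, A] at hd
      rw [← hd]
      exact le_add_of_nonneg_right (hμ _)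
    · ext j
      simpa [A, Fintype.sum_sum_type] using congrFun hk (Sum.inl j)
  · rintro ⟨lam, hlam, hd, rfl⟩ x hx
    have hsum : 0 ≤ ∑ i, lam i * (a i ⬝ᵥ x + b i) :=
      Finset.sum_nonneg fun i _ => mul_nonneg (hlam i) (hx i)
    simp only [mul_add, Finset.sum_add_distrib] at hsum
    simp only [sum_dotProduct, smul_dotProduct, smul_eq_mul]
    unfold dotProduct at hd
    linarith

end LinearOrderedField

/-- Farkas' Lemma (affine form over the rationals). -/
theorem farkas_affine (m n : ℕ) (a : Fin m → Fin n → ℚ) (b : Fin m → ℚ)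
    (hsat : ∃ x : Fin n → ℚ, ∀ i : Fin m, (∑ j, a i j * x j) + b i ≥ 0)
    (c : Fin n → ℚ) (d : ℚ) :
    (∀ x : Fin n → ℚ, (∀ i : Fin m, (∑ j, a i j * x j) + b i ≥ 0) →
        (∑ j, c j * x j) + d ≥ 0) ↔
    (∃ lam : Fin m → ℚ, (∀ i, lam i ≥ 0) ∧ d ≥ ∑ i, lam i * b i ∧
        ∀ j : Fin n, c j = ∑ i, lam i * a i j) := by
  refine (forall_dotProduct_add_nonneg_iff (c := c) (d := d) hsat).trans <|
    exists_congr fun lam => and_congr Iff.rfl <| and_congr Iff.rfl ?_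
  simp only [funext_iff, Finset.sum_apply, Pi.smul_apply, smul_eq_mul, eq_comm]
end

section
/- Soundness of eventual linear ranking functions: Let n be a natural number and let c be a binary relation on ℚ^n (functions Fin n → ℚ). Suppose f : (Fin n → ℚ) → ℚ satisfies f(x') ≥ 1 + f(x) for all x, x' with c(x, x'), and suppose ρ : (Fin n → ℚ) → ℚ and k : ℚ satisfy: for all x, x' with c(x, x') and f(x) ≥ k, both ρ(x) ≥ 1 + ρ(x') and ρ(x) ≥ 0. Then there is no infinite sequence x : ℕ → (Fin n → ℚ) with c(x i, x (i+1)) for every i : ℕ. -/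
/-- Soundness of eventual linear ranking functions. -/
theorem eventual_ranking_sound (n : ℕ) (c : (Fin n → ℚ) → (Fin n → ℚ) → Prop)
    (f : (Fin n → ℚ) → ℚ) (hf : ∀ x x', c x x' → f x' ≥ 1 + f x)
    (ρ : (Fin n → ℚ) → ℚ) (k : ℚ)
    (hρ : ∀ x x', c x x' → f x ≥ k → ρ x ≥ 1 + ρ x' ∧ ρ x ≥ 0) :
    ¬ ∃ x : ℕ → (Fin n → ℚ), ∀ i : ℕ, c (x i) (x (i + 1)) := by
  rintro ⟨x, hx⟩
  -- f grows at least linearly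
  have hgrow : ∀ i : ℕ, f (x i) ≥ f (x 0) + i := by
    intro i
    induction i with
    | zero => simp
    | succ m ih =>
      have := hf _ _ (hx m)
      push_cast
      linarith
  -- choose N with f (x N) ≥ k
  obtain ⟨N, hN⟩ := exists_nat_ge (k - f (x 0))
  have hkN : ∀ m : ℕ, f (x (N + m)) ≥ k := by
    intro m
    
    
    have h2 := hgrow (N + m)
    push_cast at h2
    linarith
  -- ρ decreases by 1 each step after N
  have hdec : ∀ m : ℕ, ρ (x N) ≥ m + ρ (x (N + m)) := by
    intro m
    induction m with
    | zero => simp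
    | succ j ih =>
      have h1 := hρ _ _ (hx (N + j)) (hkN j)
      have : N + (j + 1) = (N + j) + 1 := by ring
      rw [this]
      push_cast
      linarith [h1.1]
  obtain ⟨M, hM⟩ := exists_nat_ge (ρ (x N))
  have h1 := hdec (M + 1)
  have h2 := (hρ _ _ (hx (N + (M + 1))) (hkN (M + 1))).2
  push_cast at h1
  linarith
end

section
/- The loop relation c₂ on ℚ² given by c₂((x,y),(x',y')) := x ≥ 0 ∧ y' ≤ y - 1 ∧ x' ≤ x + y admits no linear ranking function: there are no rationals a, b such that for all rationals x, y, x', y' with x ≥ 0, y' ≤ y - 1 and x' ≤ x + y, both a*x + b*y ≥ 1 + a*x' + b*y' and a*x + b*y ≥ 0 hold. -/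
/-- The loop `c₂` admits no linear ranking function. -/
theorem no_lrf_c2 :
    ¬ ∃ a b : ℚ, ∀ x y x' y' : ℚ,
      x ≥ 0 → y' ≤ y - 1 → x' ≤ x + y →
        (a * x + b * y ≥ 1 + a * x' + b * y' ∧ a * x + b * y ≥ 0) := by
  rintro ⟨a, b, h⟩
  have h1 := h 0 0 0 (-1) (by norm_num) (by norm_num) (by norm_num)
  have h2 := h 0 (-1) (-1) (-2) (by norm_num) (by norm_num) (by norm_num)
  obtain ⟨hd, _⟩ := h1
  obtain ⟨_, hn⟩ := h2
  nlinarith [hd, hn]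
end

section
/- For all rationals a, b, the following are equivalent: (1) there exists k : ℚ such that for all rationals x, y, x', y' with x ≥ 0, y' ≤ y - 1, x' ≤ x + y and -y ≥ k, both a*x + b*y ≥ 1 + a*x' + b*y' and a*x + b*y ≥ 0 hold; (2) (DEC₁(a,b) ∨ DEC₂(a,b)) ∧ (POS₁(a,b) ∨ POS₂(a,b)), where DEC₁(a,b) := ∃ λ₁ λ₂ λ₃ ≥ 0, a = λ₁ + λ₂ ∧ -a = -λ₂ ∧ b = λ₂ + λ₃ ∧ -b = -λ₃ ∧ -1 ≥ -λ₃; DEC₂(a,b) := ∃ λ₁ λ₂ λ₃ ≥ 0, ∃ λ₄ > 0, ∃ P : ℚ, a = λ₁ + λ₂ ∧ -a = -λ₂ ∧ b = λ₂ + λ₃ - λ₄ ∧ -b = -λ₃ ∧ -1 ≥ -λ₃ - P; POS₁(a,b) := ∃ λ'₁ λ'₂ λ'₃ ≥ 0, a = λ'₁ + λ'₂ ∧ 0 = -λ'₂ ∧ b = λ'₂ + λ'₃ ∧ 0 = -λ'₃ ∧ 0 ≥ -λ'₃; POS₂(a,b) := ∃ λ'₁ λ'₂ λ'₃ ≥ 0,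 ∃ λ'₄ > 0, ∃ P' : ℚ, a = λ'₁ + λ'₂ ∧ 0 = -λ'₂ ∧ b = λ'₂ + λ'₃ - λ'₄ ∧ 0 = -λ'₃ ∧ 0 ≥ -λ'₃ - P'. -/
lemma elrf_lhs_iff (a b : ℚ)
    (h : ∃ k : ℚ, ∀ x y x' y' : ℚ,
        x ≥ 0 → y' ≤ y - 1 → x' ≤ x + y → -y ≥ k →
          (a * x + b * y ≥ 1 + a * x' + b * y' ∧ a * x + b * y ≥ 0)) :
    a > 0 ∧ b = 0 := by
  obtain ⟨k, h⟩ := h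
  set y₀ : ℚ := -(max k 1) with hy₀
  have hyk : -y₀ ≥ k := by simp [hy₀]
  have hyneg : y₀ ≤ -1 := by simp [hy₀]
  -- b ≤ 0 from positivity
  have hble : b ≤ 0 := by
    have := (h 0 y₀ y₀ (y₀ - 1) le_rfl (by linarith) (by linarith) hyk).2
    nlinarith
  -- b ≥ 0
  have hbge : b ≥ 0 := by
    by_contra hb
    push_neg at hb
    set c : ℚ := 1 + a * y₀ - b with hc
    set t : ℚ := max 0 (c / b) + 1 with ht
    have ht0 : t ≥ 0 := by positivity
    have htc : b * t < c := by
      have h1 : c / b < t := by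
        have := le_max_right 0 (c / b); linarith [le_max_right 0 (c / b)]
      calc b * t < b * (c / b) := by
            exact mul_lt_mul_of_neg_left h1 hb
        _ = c := by rw [mul_div_cancel₀ _ (ne_of_lt hb)]
    have := (h 0 y₀ y₀ (y₀ - 1 - t) le_rfl (by linarith) (by linarith) hyk).1
    nlinarith
  have hb0 : b = 0 := le_antisymm hble hbge
  -- a ≥ 0
  have hage : a ≥ 0 := by
    by_contra ha
    push_neg at ha
    set c : ℚ := 1 + a * y₀ - b with hc
    set t : ℚ := max 0 (c / a) + 1 with ht
    have ht0 : t ≥ 0 := by positivity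
    have htc : a * t < c := by
      have h1 : c / a < t := by linarith [le_max_right 0 (c / a)]
      calc a * t < a * (c / a) := mul_lt_mul_of_neg_left h1 ha
        _ = c := by rw [mul_div_cancel₀ _ (ne_of_lt ha)]
    have := (h 0 y₀ (y₀ - t) (y₀ - 1) le_rfl (by linarith) (by linarith) hyk).1
    nlinarith
  have ha : a > 0 := by
    have := (h 0 y₀ y₀ (y₀ - 1) le_rfl (by linarith) (by linarith) hyk).1
    rcases eq_or_lt_of_le hage with he | hl
    · exfalso; nlinarith
    · exact hl
  exact ⟨ha, hb0⟩

/-- Existence of an eventual linear ranking function for `c₂` with increasing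
function `f(x,y) = -y` is equivalent to the satisfiability of the linearized
Farkas systems. -/
theorem elrf_characterization (a b : ℚ) :
    (∃ k : ℚ, ∀ x y x' y' : ℚ,
        x ≥ 0 → y' ≤ y - 1 → x' ≤ x + y → -y ≥ k →
          (a * x + b * y ≥ 1 + a * x' + b * y' ∧ a * x + b * y ≥ 0)) ↔
    (((∃ l1 l2 l3 : ℚ,
          l1 ≥ 0 ∧ l2 ≥ 0 ∧ l3 ≥ 0 ∧
          a = l1 + l2 ∧ -a = -l2 ∧ b = l2 + l3 ∧ -b = -l3 ∧ -1 ≥ -l3) ∨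
      (∃ l1 l2 l3 : ℚ, l1 ≥ 0 ∧ l2 ≥ 0 ∧ l3 ≥ 0 ∧ ∃ l4 > (0 : ℚ), ∃ P : ℚ,
          a = l1 + l2 ∧ -a = -l2 ∧ b = l2 + l3 - l4 ∧ -b = -l3 ∧
          -1 ≥ -l3 - P)) ∧
     ((∃ m1 m2 m3 : ℚ,
          m1 ≥ 0 ∧ m2 ≥ 0 ∧ m3 ≥ 0 ∧
          a = m1 + m2 ∧ (0 : ℚ) = -m2 ∧ b = m2 + m3 ∧ (0 : ℚ) = -m3 ∧
          (0 : ℚ) ≥ -m3) ∨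
      (∃ m1 m2 m3 : ℚ, m1 ≥ 0 ∧ m2 ≥ 0 ∧ m3 ≥ 0 ∧ ∃ m4 > (0 : ℚ), ∃ P' : ℚ,
          a = m1 + m2 ∧ (0 : ℚ) = -m2 ∧ b = m2 + m3 - m4 ∧ (0 : ℚ) = -m3 ∧
          (0 : ℚ) ≥ -m3 - P'))) := by
  constructor
  · intro h
    obtain ⟨ha, hb⟩ := elrf_lhs_iff a b h
    constructor
    · -- DEC₂ with l1=0, l2=a, l3=0, l4=a, P=1
      right
      exact ⟨0, a, 0, le_rfl, le_of_lt ha, le_rfl, a, ha, 1,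
        by ring, by ring, by rw [hb]; ring, by rw [hb], by norm_num⟩
    · -- POS₁ with m1=a, m2=0, m3=0
      left
      exact ⟨a, 0, 0, le_of_lt ha, le_rfl, le_rfl,
        by ring, by ring, by rw [hb]; ring, by ring, by norm_num⟩
  · rintro ⟨hdec, hpos⟩
    -- RHS implies a > 0 ∧ b = 0
    have hb : b = 0 ∧ a > 0 := by
      rcases hpos with ⟨m1, m2, m3, hm1, hm2, hm3, e1, e2, e3, e4, e5⟩ |
        ⟨m1, m2, m3, hm1, hm2, hm3, m4, hm4, P', e1, e2, e3, e4, e5⟩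
      · -- b = 0, a ≥ 0
        have hb0 : b = 0 := by linarith
        rcases hdec with ⟨l1, l2, l3, h1, h2, h3, f1, f2, f3, f4, f5⟩ |
          ⟨l1, l2, l3, h1, h2, h3, l4, h4, P, f1, f2, f3, f4, f5⟩
        · exfalso; linarith
        · refine ⟨hb0, ?_⟩; linarith
      · -- b < 0: contradicts both DEC cases
        exfalso
        have hbneg : b < 0 := by linarith
        rcases hdec with ⟨l1, l2, l3, h1, h2, h3, f1, f2, f3, f4, f5⟩ |
          ⟨l1, l2, l3, h1, h2, h3, l4, h4, P, f1, f2, f3, f4, f5⟩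
        · linarith
        · linarith
    obtain ⟨hb, ha⟩ := hb
    refine ⟨1 / a, fun x y x' y' hx hy' hx' hk => ?_⟩
    subst hb
    have hya : a * y ≤ -1 := by
      have : y ≤ -(1 / a) := by linarith
      have := mul_le_mul_of_nonneg_left this (le_of_lt ha)
      rw [mul_neg, mul_one_div, div_self (ne_of_gt ha)] at this
      linarith
    constructor
    · have h1 : a * x' ≤ a * (x + y) := mul_le_mul_of_nonneg_left hx' (le_of_lt ha)
      nlinarith
    · nlinarith
end

section
/- For the loop relation c₃ on ℚ² given by c₃((x,y),(x',y')) := x ≥ -1 ∧ y' ≤ y - 1 ∧ x' ≤ x + y, with increasing function f(x,y) = -y, there is no eventual linear ranking function: there exist no rationals a, b, k such that for all rationals x, y, x', y' with x ≥ -1, y' ≤ y - 1, x' ≤ x + y and -y ≥ k, both a*x + b*y ≥ 1 + a*x' + b*y' and a*x + b*y ≥ 0 hold. -/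
/-- The loop `c₃` with increasing function `f(x,y) = -y` admits no eventual
linear ranking function. -/
theorem no_elrf_c3 :
    ¬ ∃ a b k : ℚ, ∀ x y x' y' : ℚ,
      x ≥ -1 → y' ≤ y - 1 → x' ≤ x + y → -y ≥ k →
        (a * x + b * y ≥ 1 + a * x' + b * y' ∧ a * x + b * y ≥ 0) := by
  rintro ⟨a, b, k, h⟩
  set Y : ℚ := min (-k) 0 with hYdef
  have hY1 : Y ≤ -k := min_le_left _ _
  have hY0 : Y ≤ 0 := min_le_right _ _
  rcases lt_trichotomy b 0 with hb | hb | hb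
  · -- b < 0 : send y' to -∞
    rcases lt_or_ge a 0 with ha | ha
    · -- a < 0 : send x' to -∞
      set x' : ℚ := min Y ((b - 1) / a - 1) with hx'def
      have hx'Y : x' ≤ Y := min_le_left _ _
      have hx'2 : x' ≤ (b - 1) / a - 1 := min_le_right _ _
      have hax : a * x' ≥ b - 1 - a := by
        have ha' : a ≠ 0 := ne_of_lt ha
        have : a * ((b - 1) / a - 1) = b - 1 - a := by field_simp
        nlinarith
      have h1 := (h 0 Y x' (Y - 1) (by norm_num) le_rfl (by linarith) (by linarith)).1
      linarith
    · set y' : ℚ := min (Y - 1) ((b * Y - a * Y - 1) / b - 1) with hy'def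
      have hy1 : y' ≤ Y - 1 := min_le_left _ _
      have hy2 : y' ≤ (b * Y - a * Y - 1) / b - 1 := min_le_right _ _
      have hby : b * y' ≥ b * Y - a * Y - 1 - b := by
        have hb' : b ≠ 0 := ne_of_lt hb
        have : b * ((b * Y - a * Y - 1) / b - 1) = b * Y - a * Y - 1 - b := by
          field_simp
        nlinarith
      have h1 := (h 0 Y Y y' (by norm_num) hy1 (by linarith) (by linarith)).1
      linarith
  · -- b = 0
    rcases lt_or_ge a 0 with ha | ha
    · set x' : ℚ := min Y ((b - 1) / a - 1) with hx'def
      have hx'Y : x' ≤ Y := min_le_left _ _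
      have hx'2 : x' ≤ (b - 1) / a - 1 := min_le_right _ _
      have hax : a * x' ≥ b - 1 - a := by
        have ha' : a ≠ 0 := ne_of_lt ha
        have : a * ((b - 1) / a - 1) = b - 1 - a := by field_simp
        nlinarith
      have h1 := (h 0 Y x' (Y - 1) (by norm_num) le_rfl (by linarith) (by linarith)).1
      linarith
    · have h1 := h (-1) Y (Y - 1) (Y - 1) le_rfl le_rfl (by linarith) (by linarith)
      have ha0 : a = 0 := by
        have := h1.2
        rw [hb] at this
        linarith
      have := h1.1
      rw [ha0, hb] at this
      linarith
  · -- b > 0 : send y to -∞, nonnegativity at x = -1 fails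
    set y : ℚ := min Y ((a - 1) / b) with hydef
    have hy1 : y ≤ Y := min_le_left _ _
    have hy2 : y ≤ (a - 1) / b := min_le_right _ _
    have hby : b * y ≤ a - 1 := by
      have hb' : b ≠ 0 := ne_of_gt hb
      have : b * ((a - 1) / b) = a - 1 := by field_simp
      nlinarith
    have h2 := (h (-1) y (-1 + y) (y - 1) le_rfl le_rfl le_rfl (by linarith)).2
    linarith
end

section
/- The loop relation c₄ on ℚ² given by c₄((x,y),(x',y')) := x ≥ 0 ∧ x' ≤ x + y ∧ y' ≤ -y - 1 admits no linear ranking function: there are no rationals a, b such that for all rationals x, y, x', y' with x ≥ 0, x' ≤ x + y and y' ≤ -y - 1, both a*x + b*y ≥ 1 + a*x' + b*y' and a*x + b*y ≥ 0 hold. -/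
/-- The loop `c₄` admits no linear ranking function. -/
theorem no_lrf_c4 :
    ¬ ∃ a b : ℚ, ∀ x y x' y' : ℚ,
      x ≥ 0 → x' ≤ x + y → y' ≤ -y - 1 →
        (a * x + b * y ≥ 1 + a * x' + b * y' ∧ a * x + b * y ≥ 0) := by
  rintro ⟨a, b, h⟩
  have h1 := h 0 1 1 (-2) (by norm_num) (by norm_num) (by norm_num)
  have h2 := h 0 (-1) (-1) 0 (by norm_num) (by norm_num) (by norm_num)
  obtain ⟨h1a, _⟩ := h1
  obtain ⟨h2a, h2b⟩ := h2
  linarith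
end

section
/- Characterization of the space of linear increasing functions for the loop c₄ on ℚ² given by c₄((x,y),(x',y')) := x ≥ 0 ∧ x' ≤ x + y ∧ y' ≤ -y - 1: for all rationals b₁, b₂, the linear function f(x,y) = b₁*x + b₂*y satisfies (for all rationals x, y, x', y' with x ≥ 0, x' ≤ x + y and y' ≤ -y - 1, b₁*x' + b₂*y' ≥ 1 + b₁*x + b₂*y) if and only if b₁ ≤ -2 and b₁ - 2*b₂ = 0. -/
/-- Characterization of the space `INC` of linear increasing functions for
the loop `c₄`. -/
theorem inc_characterization_c4 (b1 b2 : ℚ) :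
    (∀ x y x' y' : ℚ,
        x ≥ 0 → x' ≤ x + y → y' ≤ -y - 1 →
          b1 * x' + b2 * y' ≥ 1 + b1 * x + b2 * y) ↔
    (b1 ≤ -2 ∧ b1 - 2 * b2 = 0) := by
  constructor
  · intro h
    have hb2 : -b2 ≥ 1 + 0 + 0 := by
      have := h 0 0 0 (-1) le_rfl (by norm_num) (by norm_num)
      linarith
    have ha : b1 - 2 * b2 = 0 := by
      by_contra ha
      set a := b1 - 2 * b2 with hadef
      have := h 0 ((b2 - 2) / a) ((b2 - 2) / a) (-((b2 - 2) / a) - 1)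
        le_rfl (by linarith) le_rfl
      have key : a * ((b2 - 2) / a) ≥ 1 + b2 := by ring_nf; ring_nf at this; linarith
      rw [mul_div_cancel₀ _ ha] at key
      linarith
    exact ⟨by linarith, ha⟩
  · rintro ⟨h1, h2⟩ x y x' y' hx hx' hy'
    have hb1 : b1 ≤ 0 := by linarith
    have hb2 : b2 ≤ -1 := by linarith
    have e1 := mul_le_mul_of_nonpos_left hx' hb1
    have e2 := mul_le_mul_of_nonpos_left hy' (by linarith : b2 ≤ 0)
    have hy0 : (b1 - 2 * b2) * y = 0 := by rw [h2]; ring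
    nlinarith [e1, e2, hy0]
end

section
/- For the loop relation c₄ on ℚ² given by c₄((x,y),(x',y')) := x ≥ 0 ∧ x' ≤ x + y ∧ y' ≤ -y - 1: (i) the linear function f(x,y) = -2*x - y is increasing for c₄, i.e. -2*x' - y' ≥ 1 + (-2*x - y) whenever c₄ holds; and (ii) ρ(x,y) = x is an eventual linear ranking function for (c₄, f) with threshold k = 1: for all rationals x, y, x', y' with x ≥ 0, x' ≤ x + y, y' ≤ -y - 1 and -2*x - y ≥ 1, one has x ≥ 1 + x' and x ≥ 0. In particular, c₄ admits an eventual linear ranking function although it admits no linear ranking function. -/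
/-- For the loop `c₄`: `f(x,y) = -2x - y` is increasing, `ρ(x,y) = x` is an
eventual linear ranking function for `(c₄, f)` with threshold `k = 1`, yet
`c₄` admits no linear ranking function. -/
theorem elrf_c4 :
    (∀ x y x' y' : ℚ, x ≥ 0 → x' ≤ x + y → y' ≤ -y - 1 →
        -2 * x' - y' ≥ 1 + (-2 * x - y)) ∧
    (∀ x y x' y' : ℚ, x ≥ 0 → x' ≤ x + y → y' ≤ -y - 1 → -2 * x - y ≥ 1 →
        (x ≥ 1 + x' ∧ x ≥ 0)) ∧
    ¬ ∃ a b : ℚ, ∀ x y x' y' : ℚ,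
        x ≥ 0 → x' ≤ x + y → y' ≤ -y - 1 →
          (a * x + b * y ≥ 1 + a * x' + b * y' ∧ a * x + b * y ≥ 0) := by
  refine ⟨fun x y x' y' hx h1 h2 => by linarith,
          fun x y x' y' hx h1 h2 hf => ⟨by linarith, hx⟩, ?_⟩
  rintro ⟨a, b, h⟩
  have h1 := h 0 (-1) (-1) 0 le_rfl (by norm_num) (by norm_num)
  have h2 := h 0 0 0 (-1) le_rfl (by norm_num) (by norm_num)
  obtain ⟨h1a, h1b⟩ := h1
  obtain ⟨h2a, _⟩ := h2
  nlinarith [h1a, h1b, h2a]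
end
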